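/- With the setup of a diagonal torus action on ℙ(V) with weight polytope Δ_x of a point x, the point x is polystable (there is an invariant monomial nonvanishing at x whose nonvanishing locus is affine and on which all torus orbits are closed) if and only if the origin lies in the relative interior of Δ_x. -/
import Mathlib


open Set
open Matrix Finset Set

theorem my_farkas : ∀ (m k : ℕ) (v : Fin m → Fin k → ℚ) (w : Fin k → ℚ),
    (∃ c : Fin m → ℚ, (∀ i, 0 ≤ c i) ∧ ∑ i, c i • v i = w) ∨
    (∃ l : Fin k → ℚ, (∀ i, 0 ≤ l ⬝ᵥ v i) ∧ l ⬝ᵥ w < 0) := by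
  intro m
  induction m with
  | zero =>
    intro k v w
    by_cases hw : w = 0
    · exact Or.inl ⟨0, fun i => le_refl _, by simp [hw]⟩
    · refine Or.inr ⟨-w, fun i => i.elim0, ?_⟩
      have h : w ⬝ᵥ w ≠ 0 := fun h => hw (by
        have := dotProduct_self_eq_zero.mp h; exact this)
      have h2 : 0 ≤ w ⬝ᵥ w := Finset.sum_nonneg fun j _ => mul_self_nonneg _
      have : 0 < w ⬝ᵥ w := lt_of_le_of_ne h2 (Ne.symm h)
      simpa [neg_dotProduct] using this
  | succ n ih =>
    intro k v w
    rcases ih k (fun i => v i.succ) w with ⟨c, hc, hsum⟩ | ⟨l, hl, hlw⟩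
    · refine Or.inl ⟨Fin.cons 0 c, ?_, ?_⟩
      · intro i
        refine Fin.cases ?_ ?_ i
        · simp
        · intro j; simpa using hc j
      · rw [Fin.sum_univ_succ]; simpa using hsum
    · by_cases h0 : 0 ≤ l ⬝ᵥ v 0
      · exact Or.inr ⟨l, fun i => Fin.cases h0 hl i, hlw⟩
      · push_neg at h0
        set d := l ⬝ᵥ v 0 with hd
        rcases ih k (fun i => v i.succ - ((l ⬝ᵥ v i.succ) / d) • v 0)
            (w - ((l ⬝ᵥ w) / d) • v 0) with ⟨c, hc, hsum⟩ | ⟨mu, hmu, hmuw⟩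
        · refine Or.inl ⟨Fin.cons (((l ⬝ᵥ w) - ∑ i, c i * (l ⬝ᵥ v i.succ)) / d) c, ?_, ?_⟩
          · intro i
            refine Fin.cases ?_ ?_ i
            · have hnum : (l ⬝ᵥ w) - ∑ i, c i * (l ⬝ᵥ v i.succ) < 0 := by
                have : 0 ≤ ∑ i, c i * (l ⬝ᵥ v i.succ) :=
                  Finset.sum_nonneg fun i _ => mul_nonneg (hc i) (hl i)
                linarith
              have := div_pos_of_neg_of_neg hnum h0
              simpa using this.le
            · intro j; simpa using hc j
          · rw [Fin.sum_univ_succ]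
            have expand : ∑ i, c i • (v i.succ - ((l ⬝ᵥ v i.succ) / d) • v 0)
                = (∑ i, c i • v i.succ) - (∑ i, c i * ((l ⬝ᵥ v i.succ) / d)) • v 0 := by
              simp only [smul_sub, smul_smul]
              rw [Finset.sum_sub_distrib, Finset.sum_smul]
            rw [expand] at hsum
            have hs : ∑ i, c i • v i.succ
                = w - ((l ⬝ᵥ w) / d) • v 0 + (∑ i, c i * ((l ⬝ᵥ v i.succ) / d)) • v 0 := by
              rw [← hsum]; abel
            simp only [Fin.cons_zero, Fin.cons_succ]
            rw [hs]
            have hd0 : d ≠ 0 := ne_of_lt h0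
            have : ((l ⬝ᵥ w - ∑ i, c i * (l ⬝ᵥ v i.succ)) / d)
                = (l ⬝ᵥ w) / d - ∑ i, c i * ((l ⬝ᵥ v i.succ) / d) := by
              rw [sub_div, Finset.sum_div]
              congr 1
              exact Finset.sum_congr rfl fun i _ => mul_div_assoc _ _ _
            rw [this, sub_smul]
            abel
        · refine Or.inr ⟨mu - ((mu ⬝ᵥ v 0) / d) • l, ?_, ?_⟩
          · intro i
            refine Fin.cases ?_ ?_ i
            · simp [sub_dotProduct, smul_dotProduct, ← hd,
                div_mul_cancel₀ _ (ne_of_lt h0)]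
            · intro j
              have := hmu j
              simp only [dotProduct_sub, dotProduct_smul, smul_eq_mul] at this
              simp only [sub_dotProduct, smul_dotProduct, smul_eq_mul]
              calc (0:ℚ) ≤ mu ⬝ᵥ v j.succ - (l ⬝ᵥ v j.succ) / d * (mu ⬝ᵥ v 0) := by
                    linarith [this]
                _ = mu ⬝ᵥ v j.succ - (mu ⬝ᵥ v 0) / d * (l ⬝ᵥ v j.succ) := by ring
          · have := hmuw
            simp only [dotProduct_sub, dotProduct_smul, smul_eq_mul] at this
            simp only [sub_dotProduct, smul_dotProduct, smul_eq_mul]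
            calc mu ⬝ᵥ w - (mu ⬝ᵥ v 0) / d * (l ⬝ᵥ w)
                = mu ⬝ᵥ w - (l ⬝ᵥ w) / d * (mu ⬝ᵥ v 0) := by ring
              _ < 0 := by linarith [this]

theorem my_stiemke (k m : ℕ) (α : Fin m → Fin k → ℚ) :
    (∃ a : Fin m → ℚ, (∀ i, 0 < a i) ∧ ∑ i, a i • α i = 0) ∨
    (∃ l : Fin k → ℚ, (∀ i, 0 ≤ l ⬝ᵥ α i) ∧ ∃ i, 0 < l ⬝ᵥ α i) := by
  by_cases h : ∀ i : Fin m, ∃ c : Fin m → ℚ, (∀ j, 0 ≤ c j) ∧ ∑ j, c j • α j = -α i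
  · left
    choose c hc hcs using h
    refine ⟨fun j => 1 + ∑ i, c i j, fun j => by
      have := Finset.sum_nonneg fun i (_ : i ∈ Finset.univ) => hc i j
      simp only []
      linarith, ?_⟩
    calc ∑ j, (1 + ∑ i, c i j) • α j
        = ∑ j, (α j + ∑ i, c i j • α j) := by
          refine Finset.sum_congr rfl fun j _ => ?_
          rw [add_smul, one_smul, Finset.sum_smul]
      _ = ∑ j, α j + ∑ j, ∑ i, c i j • α j := Finset.sum_add_distrib
      _ = ∑ j, α j + ∑ i, ∑ j, c i j • α j := by rw [Finset.sum_comm]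
      _ = ∑ j, α j + ∑ i, -α i := by simp only [hcs]
      _ = 0 := by simp
  · right
    push_neg at h
    obtain ⟨i0, hi0⟩ := h
    rcases my_farkas m k α (-α i0) with ⟨c, hc, hcs⟩ | ⟨l, hl, hlw⟩
    · exact absurd hcs (hi0 c hc)
    · refine ⟨l, hl, i0, ?_⟩
      simpa [dotProduct_neg] using hlw

theorem pos_comb_mem_intrinsicInterior (k m : ℕ) (hm : 0 < m)
    (β : Fin m → (Fin k → ℝ)) (w : Fin m → ℝ)
    (hw : ∀ i, 0 < w i) (hw1 : ∑ i, w i = 1) (hw0 : ∑ i, w i • β i = 0) :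
    (0 : Fin k → ℝ) ∈ intrinsicInterior ℝ (convexHull ℝ (Set.range β)) := by
  haveI : Nonempty (Fin m) := ⟨⟨0, hm⟩⟩
  set S : Set (Fin k → ℝ) := Set.range β with hS
  set H := convexHull ℝ S with hH
  set wmin := Finset.univ.inf' Finset.univ_nonempty w with hwmin
  have hwminpos : 0 < wmin := (Finset.lt_inf'_iff _).2 fun i _ => hw i
  set ε : ℝ := wmin / (2 * (m + 1)) with hε
  have hεpos : 0 < ε := by positivity
  have hwle1 : ∀ i, w i ≤ 1 := by
    intro i
    rw [← hw1]
    exact Finset.single_le_sum (fun j _ => (hw j).le) (Finset.mem_univ i)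
  have hball : ∀ c : Fin m → ℝ, dist c w < ε → (∑ i, c i • β i) ∈ H := by
    intro c hc
    set s := ∑ i, c i with hs'
    set c' := fun i => c i + (1 - s) * w i with hc'
    have hcw : ∀ i, |c i - w i| < ε := by
      intro i
      have h1 : ‖(c - w) i‖ ≤ ‖c - w‖ := norm_le_pi_norm (c - w) i
      rw [dist_eq_norm] at hc
      simp only [Pi.sub_apply, Real.norm_eq_abs] at h1
      linarith
    have hsum1 : |s - 1| ≤ m * ε := by
      have h2 : s - 1 = ∑ i, (c i - w i) := by
        rw [Finset.sum_sub_distrib, hw1]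
      rw [h2]
      calc |∑ i, (c i - w i)| ≤ ∑ i, |c i - w i| := Finset.abs_sum_le_sum_abs _ _
        _ ≤ ∑ _i : Fin m, ε := Finset.sum_le_sum fun i _ => (hcw i).le
        _ = m * ε := by simp [mul_comm]
    have hc'pos : ∀ i, 0 < c' i := by
      intro i
      have h3 := abs_lt.mp (hcw i)
      have h4 := abs_le.mp hsum1
      have h5 : wmin ≤ w i := Finset.inf'_le _ (Finset.mem_univ i)
      have h6 := hwle1 i
      have h7 := hw i
      have hmnn : (0:ℝ) ≤ (m:ℝ) := Nat.cast_nonneg m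
      have key : wmin - (↑m + 1) * ε ≤ c i + (1 - s) * w i := by
        have e1 : w i - ε ≤ c i := by linarith [h3.1]
        have e2 : -(↑m * ε) * w i ≤ (1 - s) * w i := by
          apply mul_le_mul_of_nonneg_right _ h7.le
          linarith [h4.1]
        have e3 : -(↑m * ε) ≤ -(↑m * ε) * w i := by
          nlinarith
        nlinarith
      have : wmin - (↑m + 1) * ε = wmin / 2 := by
        rw [hε]; field_simp; ring
      simp only [hc']
      nlinarith [key, this]
    have hc'sum : ∑ i, c' i = 1 := by
      simp only [hc']
      rw [Finset.sum_add_distrib, ← Finset.mul_sum, hw1, ← hs']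
      ring
    have hc'eq : ∑ i, c' i • β i = ∑ i, c i • β i := by
      simp only [hc', add_smul]
      rw [Finset.sum_add_distrib]
      have : ∑ i, ((1 - s) * w i) • β i = (1 - s) • ∑ i, w i • β i := by
        rw [Finset.smul_sum]
        exact Finset.sum_congr rfl fun i _ => by rw [smul_smul]
      rw [this, hw0, smul_zero, add_zero]
    rw [← hc'eq]
    have hmem := Finset.centerMass_mem_convexHull (Finset.univ) (fun i _ => (hc'pos i).le)
        (by rw [hc'sum]; norm_num) (fun i (_ : i ∈ Finset.univ) => Set.mem_range_self (f := β) i)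
    rwa [Finset.centerMass_eq_of_sum_1 _ _ hc'sum] at hmem
  have h0H : (0 : Fin k → ℝ) ∈ H := by
    have := hball w (by rw [dist_self]; exact hεpos)
    rwa [hw0] at this
  have h0A : (0 : Fin k → ℝ) ∈ affineSpan ℝ H := subset_affineSpan ℝ H h0H
  set A := affineSpan ℝ H with hA
  set D := A.direction with hD
  have hAD : ∀ y, y ∈ A → y ∈ D := by
    intro y hy
    have := AffineSubspace.vsub_mem_direction hy h0A
    simpa using this
  have hβA : ∀ i, β i ∈ A :=
    fun i => subset_affineSpan ℝ H (subset_convexHull ℝ S (Set.mem_range_self i))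
  have hβD : ∀ i, β i ∈ D := fun i => hAD _ (hβA i)
  set L : (Fin m → ℝ) →ₗ[ℝ] (Fin k → ℝ) :=
    { toFun := fun c => ∑ i, c i • β i
      map_add' := fun x y => by
        simp only [Pi.add_apply, add_smul, Finset.sum_add_distrib]
      map_smul' := fun r x => by
        simp only [Pi.smul_apply, smul_eq_mul, RingHom.id_apply, Finset.smul_sum, smul_smul] }
    with hL
  have hLD : ∀ c, L c ∈ D :=
    fun c => show ∑ i, c i • β i ∈ D from Submodule.sum_mem _ fun i _ => D.smul_mem (c i) (hβD i)
  set L' : (Fin m → ℝ) →ₗ[ℝ] D := L.codRestrict D hLD with hL'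
  have hsurj : Function.Surjective L' := by
    have hrange : D ≤ LinearMap.range L := by
      have h1 : D ≤ Submodule.span ℝ S := by
        rw [hD, hA, affineSpan_convexHull, direction_affineSpan, vectorSpan_def]
        apply Submodule.span_le.mpr
        rintro x hx
        rw [Set.mem_vsub] at hx
        obtain ⟨p, hp, q, hq, rfl⟩ := hx
        rw [vsub_eq_sub]
        exact sub_mem (Submodule.subset_span hp) (Submodule.subset_span hq)
      have h2 : Submodule.span ℝ S ≤ LinearMap.range L := by
        apply Submodule.span_le.mpr
        rintro x ⟨i, rfl⟩
        refine ⟨Pi.single i 1, ?_⟩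
        simp [hL, Pi.single_apply, ite_smul]
      exact le_trans h1 h2
    intro d
    obtain ⟨c, hc⟩ := hrange d.2
    exact ⟨c, Subtype.ext hc⟩
  have hopen : IsOpenMap (LinearMap.toContinuousLinearMap L') :=
    ContinuousLinearMap.isOpenMap _ hsurj
  have hisopen : IsOpen ((LinearMap.toContinuousLinearMap L') '' Metric.ball w ε) :=
    hopen _ Metric.isOpen_ball
  have h0D : (0 : Fin k → ℝ) ∈ D := hAD _ h0A
  have hmem0 : (⟨0, h0D⟩ : D) ∈ (LinearMap.toContinuousLinearMap L') '' Metric.ball w ε := by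
    refine ⟨w, Metric.mem_ball_self hεpos, ?_⟩
    apply Subtype.ext
    simpa [hL', hL] using hw0
  obtain ⟨δ, hδpos, hδ⟩ := Metric.isOpen_iff.mp hisopen _ hmem0
  rw [mem_intrinsicInterior]
  refine ⟨⟨0, h0A⟩, ?_, rfl⟩
  rw [mem_interior]
  refine ⟨(Subtype.val : A → (Fin k → ℝ)) ⁻¹' (Metric.ball (0 : Fin k → ℝ) δ), ?_,
    continuous_subtype_val.isOpen_preimage _ Metric.isOpen_ball, ?_⟩
  · rintro ⟨y, hyA⟩ hyb
    have hyD : y ∈ D := hAD y hyA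
    have hyball : (⟨y, hyD⟩ : D) ∈ Metric.ball (⟨0, h0D⟩ : D) δ := by
      rw [Metric.mem_ball, Subtype.dist_eq]
      exact hyb
    obtain ⟨c, hcball, hceq⟩ := hδ hyball
    have hyc : y = ∑ i, c i • β i := by
      have := congrArg Subtype.val hceq
      exact this.symm
    show y ∈ H
    rw [hyc]
    exact hball c hcball
  · show dist (0 : Fin k → ℝ) 0 < δ
    rw [dist_self]; exact hδpos

section Main

/-- convex-geometric core of polystability for torus actions:
for rational vectors `α₁, …, αₘ ∈ ℚᵏ` (with `m ≥ 1`), `0` lies in the relative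
interior of their convex hull if and only if there exist strictly positive
rationals `aᵢ` with `Σ aᵢαᵢ = 0`. -/
theorem stmt_7 (k m : ℕ) (hm : 0 < m) (α : Fin m → Fin k → ℚ) :
    (0 : Fin k → ℝ) ∈
        intrinsicInterior ℝ (convexHull ℝ (Set.range fun i j => (α i j : ℝ))) ↔
      ∃ a : Fin m → ℚ, (∀ i, 0 < a i) ∧ ∑ i, a i • α i = 0 := by
  haveI : Nonempty (Fin m) := ⟨⟨0, hm⟩⟩
  set β : Fin m → Fin k → ℝ := fun i j => (α i j : ℝ) with hβdef
  set H := convexHull ℝ (Set.range β) with hH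
  constructor
  · intro h
    rcases my_stiemke k m α with ha | ⟨l, hl, i0, hi0⟩
    · exact ha
    · exfalso
      set f : (Fin k → ℝ) →ₗ[ℝ] ℝ :=
        { toFun := fun y => ∑ j, (l j : ℝ) * y j
          map_add' := fun x y => by
            simp only [Pi.add_apply, mul_add, Finset.sum_add_distrib]
          map_smul' := fun r y => by
            simp only [Pi.smul_apply, smul_eq_mul, RingHom.id_apply, Finset.mul_sum]
            exact Finset.sum_congr rfl fun j _ => by ring } with hf
      have hfβ : ∀ i, f (β i) = ((l ⬝ᵥ α i : ℚ) : ℝ) := by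
        intro i
        show (∑ j, (l j : ℝ) * (α i j : ℝ)) = _
        rw [dotProduct]
        push_cast
        rfl
      have hfH : ∀ y ∈ H, 0 ≤ f y := by
        intro y hy
        have hsub : H ⊆ {y | 0 ≤ f y} := by
          apply convexHull_min
          · rintro _ ⟨i, rfl⟩
            show (0:ℝ) ≤ f (β i)
            rw [hfβ i]
            exact_mod_cast hl i
          · exact convex_halfSpace_ge (LinearMap.isLinear f) 0
        exact hsub hy
      have h0H : (0 : Fin k → ℝ) ∈ H := intrinsicInterior_subset h
      have h0A : (0 : Fin k → ℝ) ∈ affineSpan ℝ H := subset_affineSpan ℝ H h0H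
      have hβ0A : β i0 ∈ affineSpan ℝ H :=
        subset_affineSpan ℝ H (subset_convexHull ℝ _ ⟨i0, rfl⟩)
      have hdir : ∀ t : ℝ, (-t) • β i0 ∈ affineSpan ℝ H := by
        intro t
        have h1 : β i0 -ᵥ (0 : Fin k → ℝ) ∈ (affineSpan ℝ H).direction :=
          AffineSubspace.vsub_mem_direction hβ0A h0A
        have h2 := Submodule.smul_mem _ (-t) h1
        have h3 := AffineSubspace.vadd_mem_of_mem_direction h2 h0A
        simpa using h3
      obtain ⟨y, hy, hy0⟩ := mem_intrinsicInterior.mp h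
      set g : ℝ → affineSpan ℝ H := fun t => ⟨(-t) • β i0, hdir t⟩ with hg
      have hgc : Continuous g :=
        Continuous.subtype_mk (continuous_id.neg.smul continuous_const) _
      have hg0 : g 0 = y := Subtype.ext (by simp [hg, hy0])
      have hopen : IsOpen (g ⁻¹' interior ((Subtype.val :
          affineSpan ℝ H → (Fin k → ℝ)) ⁻¹' H)) :=
        hgc.isOpen_preimage _ isOpen_interior
      have h0mem : (0:ℝ) ∈ g ⁻¹' interior ((Subtype.val :
          affineSpan ℝ H → (Fin k → ℝ)) ⁻¹' H) := by
        rw [Set.mem_preimage, hg0]; exact hy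
      obtain ⟨r, hrpos, hr⟩ := Metric.isOpen_iff.mp hopen 0 h0mem
      have hrb : (r/2 : ℝ) ∈ Metric.ball (0:ℝ) r := by
        rw [Metric.mem_ball, Real.dist_eq, sub_zero, abs_of_pos (by linarith)]
        linarith
      have hmem : g (r/2) ∈ interior ((Subtype.val :
          affineSpan ℝ H → (Fin k → ℝ)) ⁻¹' H) := hr hrb
      have hcH : ((-(r/2)) • β i0) ∈ H := by
        have h' := interior_subset hmem
        exact h'
      have h1 := hfH _ hcH
      rw [_root_.map_smul, smul_eq_mul] at h1
      have h2 : (0:ℝ) < f (β i0) := by rw [hfβ]; exact_mod_cast hi0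
      nlinarith
  · rintro ⟨a, hapos, hasum⟩
    set t : ℚ := ∑ i, a i with ht
    have htpos : 0 < t := Finset.sum_pos (fun i _ => hapos i) Finset.univ_nonempty
    have htR : (0:ℝ) < (t:ℝ) := by exact_mod_cast htpos
    set w : Fin m → ℝ := fun i => (a i : ℝ) / (t : ℝ) with hw
    apply pos_comb_mem_intrinsicInterior k m hm β w
    · intro i
      have : (0:ℝ) < (a i : ℝ) := by exact_mod_cast hapos i
      positivity
    · rw [hw, ← Finset.sum_div]
      rw [div_eq_one_iff_eq (ne_of_gt htR)]
      rw [ht]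
      push_cast
      rfl
    · funext j
      have hj : ∑ i, a i * α i j = 0 := by
        have := congrFun hasum j
        simpa [Finset.sum_apply] using this
      have : ∑ i, (a i : ℝ) * (α i j : ℝ) = 0 := by
        exact_mod_cast congrArg (fun q : ℚ => (q : ℝ)) hj
      simp only [Finset.sum_apply, Pi.smul_apply, smul_eq_mul, hw]
      rw [show (0 : Fin k → ℝ) j = 0 from rfl]
      calc ∑ i, (a i:ℝ) / (t:ℝ) * β i j = (∑ i, (a i:ℝ) * (α i j:ℝ)) / (t:ℝ) := by
            rw [Finset.sum_div]
            exact Finset.sum_congr rfl fun i _ => by rw [hβdef]; ring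
        _ = 0 := by rw [this, zero_div]

end Main
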